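/- Let p be an n×n real matrix with nonnegative entries and let γ ∈ [−1,1]. The fractional free energy F_f^γ(·|p) is convex on the β-polytope 𝓑_p of p: for all β₁, β₂ ∈ 𝓑_p and all t ∈ [0,1], F_f^γ(t·β₁ + (1−t)·β₂ | p) ≤ t·F_f^γ(β₁|p) + (1−t)·F_f^γ(β₂|p). -/

import Mathlib

open scoped BigOperators

/-- The permanent of an `n × n` real matrix. -/
noncomputable def permanent {n : ℕ} (p : Matrix (Fin n) (Fin n) ℝ) : ℝ :=
  ∑ σ : Equiv.Perm (Fin n), ∏ i, p i (σ i)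

/-- A matrix is doubly stochastic: nonnegative entries, all row and column sums equal 1. -/
def DoublyStochastic {n : ℕ} (β : Matrix (Fin n) (Fin n) ℝ) : Prop :=
  (∀ i j, 0 ≤ β i j) ∧ (∀ i, ∑ j, β i j = 1) ∧ (∀ j, ∑ i, β i j = 1)

/-- Membership in the β-polytope `𝓑_p` of `p`. -/
def InPolytope {n : ℕ} (p β : Matrix (Fin n) (Fin n) ℝ) : Prop :=
  DoublyStochastic β ∧ ∀ i j, p i j = 0 → β i j = 0

/-- Membership in the interior of the β-polytope of `p`. -/
def InInterior {n : ℕ} (p β : Matrix (Fin n) (Fin n) ℝ) : Prop :=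
  InPolytope p β ∧ ∀ i j, 0 < p i j → 0 < β i j ∧ β i j < 1

/-- Bethe free energy `F_BP(β|p)` (sum over entries with `p i j > 0`;
the convention `0 * log 0 = 0` holds since `Real.log 0 = 0`). -/
noncomputable def FBP {n : ℕ} (p β : Matrix (Fin n) (Fin n) ℝ) : ℝ :=
  ∑ i, ∑ j, if 0 < p i j then
    β i j * Real.log (β i j / p i j) - (1 - β i j) * Real.log (1 - β i j)
  else 0

/-- Mean-field free energy `F_MF(β|p)`. -/
noncomputable def FMF {n : ℕ} (p β : Matrix (Fin n) (Fin n) ℝ) : ℝ :=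
  ∑ i, ∑ j, if 0 < p i j then
    β i j * Real.log (β i j / p i j) + (1 - β i j) * Real.log (1 - β i j)
  else 0

/-- Fractional free energy `F_f^γ(β|p)`. -/
noncomputable def Ff {n : ℕ} (γ : ℝ) (p β : Matrix (Fin n) (Fin n) ℝ) : ℝ :=
  ∑ i, ∑ j, if 0 < p i j then
    β i j * Real.log (β i j / p i j) + γ * ((1 - β i j) * Real.log (1 - β i j))
  else 0

/-- Optimal fractional partition function `Z_of^γ(p) = exp(-min_{β ∈ 𝓑_p} F_f^γ(β|p))`
(the minimum is expressed as an infimum; it is attained since `𝓑_p` is nonempty and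
compact when `permanent p > 0` and `F_f^γ(·|p)` is continuous on it). -/
noncomputable def Zof {n : ℕ} (γ : ℝ) (p : Matrix (Fin n) (Fin n) ℝ) : ℝ :=
  Real.exp (-(sInf ((fun β => Ff γ p β) '' {β | InPolytope p β})))

/-!
Up to the term `-β log p`, which is linear in `β`, `F_f^γ(β|p)` is the sum over the rows of `β`
of `∑ⱼ g(βᵢⱼ)` with `g(z) = z log z + γ (1 - z) log (1 - z)`; the entries excluded from `Ff` have
`βᵢⱼ = 0` and `g(0) = 0`. The rows lie in the standard simplex, so it suffices that `∑ⱼ g(xⱼ)` is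
convex there. Along a segment with direction `v` (so `∑ⱼ vⱼ = 0`) its second derivative is
`∑ⱼ vⱼ² (1/xⱼ + γ/(1 - xⱼ))`, which for `γ ≥ -1` is nonnegative because
`∑ v²/(1 - x) ≤ ∑ v²/x` on the simplex: at most one coordinate `xᵢ` exceeds `1/2`, and as
`vᵢ = -∑_{k ≠ i} vₖ`, Cauchy–Schwarz bounds its term by those of the other coordinates.
-/

open Finset Real

section StdSimplex

theorem mul_sq_div_le_sq_div_sub_sq_div_one_sub {s y w : ℝ} (hs : s < 1) (hy0 : 0 ≤ y)
    (hys : y ≤ s) (hyw : y = 0 → w = 0) :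
    (1 - 2 * s) / (1 - s) * (w ^ 2 / y) ≤ w ^ 2 / y - w ^ 2 / (1 - y) := by
  rcases hy0.eq_or_lt with h0 | hpos
  · simp [hyw h0.symm]
  have h1 : 0 < 1 - y := by linarith
  calc (1 - 2 * s) / (1 - s) * (w ^ 2 / y) ≤ (1 - 2 * y) / (1 - y) * (w ^ 2 / y) := by
        refine mul_le_mul_of_nonneg_right ?_ (by positivity)
        rw [div_le_div_iff₀ (by linarith) h1]; nlinarith
    _ = w ^ 2 / y - w ^ 2 / (1 - y) := by field_simp; ring

variable {ι : Type*} [Fintype ι] {x v : ι → ℝ}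

theorem sum_sq_div_one_sub_le_sum_sq_div (hx : x ∈ stdSimplex ℝ ι) (hv : ∑ k, v k = 0)
    (hxv : ∀ k, x k = 0 → v k = 0) :
    ∑ k, v k ^ 2 / (1 - x k) ≤ ∑ k, v k ^ 2 / x k := by
  classical
  obtain ⟨hx0, hx1⟩ := hx
  by_cases hsmall : ∀ k, x k ≤ 1 / 2
  · refine sum_le_sum fun k _ => ?_
    rcases (hx0 k).eq_or_lt with hk | hk
    · simp [hxv k hk.symm]
    · exact div_le_div_of_nonneg_left (sq_nonneg _) hk (by linarith [hsmall k])
  push Not at hsmall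
  obtain ⟨i, hi⟩ := hsmall
  set s := ∑ k ∈ univ.erase i, x k
  set S := ∑ k ∈ univ.erase i, v k ^ 2 / x k
  have hxi : x i = 1 - s := by rw [← hx1, ← add_sum_erase _ _ (mem_univ i)]; ring
  have hvi : v i = -∑ k ∈ univ.erase i, v k := by
    rw [eq_neg_iff_add_eq_zero, add_sum_erase _ _ (mem_univ i), hv]
  have hs0 : 0 ≤ s := sum_nonneg fun k _ => hx0 k
  have hxk : ∀ k ∈ univ.erase i, x k ≤ s := fun k hk => single_le_sum (fun j _ => hx0 j) hk
  -- Cauchy–Schwarz; `0 / 0 = 0` takes care of the entries with `x k = 0`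
  have hCS : v i ^ 2 ≤ s * S := by
    rw [hvi, neg_sq]
    refine sum_sq_le_sum_mul_sum_of_sq_le_mul _ (fun k _ => hx0 k)
      (fun k _ => div_nonneg (sq_nonneg _) (hx0 k)) fun k _ => ?_
    rcases (hx0 k).eq_or_lt with hk | hk
    · simp [hxv k hk.symm]
    · rw [mul_div_cancel₀ _ hk.ne']
  set r := (1 - 2 * s) / (1 - s) with hr_def
  have hr : 0 ≤ r := div_nonneg (by linarith) (by linarith)
  have hS : 0 ≤ S := sum_nonneg fun k _ => div_nonneg (sq_nonneg _) (hx0 k)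
  have hleft : v i ^ 2 / s - v i ^ 2 / x i ≤ r * S := by
    rcases hs0.eq_or_lt with hs | hs
    · rw [← hs, div_zero]
      linarith [div_nonneg (sq_nonneg (v i)) (hx0 i), mul_nonneg hr hS]
    calc v i ^ 2 / s - v i ^ 2 / x i = r * (v i ^ 2 / s) := by
          rw [hxi, hr_def]; field_simp [show 1 - s ≠ 0 by linarith]; ring
      _ ≤ r * S := mul_le_mul_of_nonneg_left ((div_le_iff₀ hs).2 (by linarith)) hr
  have hright : r * S ≤ ∑ k ∈ univ.erase i, (v k ^ 2 / x k - v k ^ 2 / (1 - x k)) := by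
    rw [mul_sum]
    exact sum_le_sum fun k hk =>
      mul_sq_div_le_sq_div_sub_sq_div_one_sub (by linarith) (hx0 k) (hxk k hk) (hxv k)
  rw [sum_sub_distrib] at hright
  rw [← add_sum_erase _ _ (mem_univ i), ← add_sum_erase _ _ (mem_univ i),
    show 1 - x i = s by linarith]
  linarith

theorem sum_sq_mul_inv_add_mul_inv_nonneg {γ : ℝ} (hγ : -1 ≤ γ)
    (hx : x ∈ stdSimplex ℝ ι) (hv : ∑ k, v k = 0) (hxv : ∀ k, x k = 0 → v k = 0) :
    0 ≤ ∑ k, v k ^ 2 * ((x k)⁻¹ + γ * (1 - x k)⁻¹) := by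
  have hbethe := sum_sq_div_one_sub_le_sum_sq_div hx hv hxv
  have hγterm : ∀ k, -(v k ^ 2 / (1 - x k)) ≤ γ * (v k ^ 2 / (1 - x k)) := fun k => by
    have hxk : x k ≤ 1 := stdSimplex.le_one ⟨x, hx⟩ k
    have := div_nonneg (sq_nonneg (v k)) (sub_nonneg.2 hxk)
    nlinarith
  calc (0 : ℝ) ≤ ∑ k, (v k ^ 2 / x k - v k ^ 2 / (1 - x k)) := by
        rw [sum_sub_distrib]; linarith
    _ ≤ ∑ k, v k ^ 2 * ((x k)⁻¹ + γ * (1 - x k)⁻¹) := sum_le_sum fun k _ => by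
        rw [mul_add, ← div_eq_mul_inv, mul_left_comm, ← div_eq_mul_inv, sub_eq_add_neg]
        linarith [hγterm k]

end StdSimplex

noncomputable def fracEnergy (γ z : ℝ) : ℝ :=
  z * log z + γ * ((1 - z) * log (1 - z))

theorem continuous_fracEnergy (γ : ℝ) : Continuous (fracEnergy γ) :=
  continuous_mul_log.add
    (continuous_const.mul (continuous_mul_log.comp (continuous_const.sub continuous_id)))

noncomputable def fracEnergyDeriv (γ z : ℝ) : ℝ :=
  log z + 1 - γ * (log (1 - z) + 1)

theorem hasDerivAt_fracEnergy (γ : ℝ) {z : ℝ} (hz : z ∈ Set.Ioo 0 1) :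
    HasDerivAt (fracEnergy γ) (fracEnergyDeriv γ z) z := by
  have hz' : 1 - z ≠ 0 := by linarith [hz.2]
  have h1z := (hasDerivAt_mul_log hz').comp z ((hasDerivAt_id' z).const_sub 1)
  exact ((hasDerivAt_mul_log hz.1.ne').fun_add (h1z.const_mul γ)).congr_deriv
    (by rw [fracEnergyDeriv]; ring)

theorem hasDerivAt_fracEnergyDeriv (γ : ℝ) {z : ℝ} (hz : z ∈ Set.Ioo 0 1) :
    HasDerivAt (fracEnergyDeriv γ) (z⁻¹ + γ * (1 - z)⁻¹) z := by
  have hz' : 1 - z ≠ 0 := by linarith [hz.2]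
  have h1z := ((hasDerivAt_log hz').comp z ((hasDerivAt_id' z).const_sub 1)).add_const 1
  exact (((hasDerivAt_log hz.1.ne').add_const 1).fun_sub (h1z.const_mul γ)).congr_deriv (by ring)

theorem hasDerivAt_comp_add_mul {f f' : ℝ → ℝ} {a c u : ℝ}
    (h : c = 0 ∨ HasDerivAt f (f' (a + u * c)) (a + u * c)) :
    HasDerivAt (fun u => f (a + u * c)) (c * f' (a + u * c)) u := by
  rcases h with rfl | h
  · simpa using hasDerivAt_const u (f a)
  · exact (h.comp u (((hasDerivAt_id' u).mul_const c).const_add a)).congr_deriv (by ring)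

theorem add_mul_sub_mem_Ioo {a b u : ℝ} (ha : a ∈ Set.Icc 0 1) (hb : b ∈ Set.Icc 0 1) (hab : a ≠ b)
    (hu : u ∈ Set.Ioo 0 1) : a + u * (b - a) ∈ Set.Ioo 0 1 := by
  obtain ⟨ha0, ha1⟩ := ha; obtain ⟨hb0, hb1⟩ := hb; obtain ⟨hu0, hu1⟩ := hu
  rcases hab.lt_or_gt with h | h <;> constructor <;> nlinarith

theorem convexOn_stdSimplex_sum_fracEnergy {ι : Type*} [Fintype ι] {γ : ℝ} (hγ : -1 ≤ γ) :
    ConvexOn ℝ (stdSimplex ℝ ι) fun x => ∑ k, fracEnergy γ (x k) := by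
  refine ⟨convex_stdSimplex ℝ ι, fun x hx y hy a b ha hb hab => ?_⟩
  have hx01 : ∀ k, x k ∈ Set.Icc 0 1 := fun k => ⟨hx.1 k, stdSimplex.le_one ⟨x, hx⟩ k⟩
  have hy01 : ∀ k, y k ∈ Set.Icc 0 1 := fun k => ⟨hy.1 k, stdSimplex.le_one ⟨y, hy⟩ k⟩
  have hinterior : ∀ u ∈ Set.Ioo (0 : ℝ) 1, ∀ k,
      x k - y k = 0 ∨ y k + u * (x k - y k) ∈ Set.Ioo 0 1 := fun u hu k =>
    or_iff_not_imp_left.2 fun h => add_mul_sub_mem_Ioo (hy01 k) (hx01 k)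
      (fun h' => h (by rw [h', sub_self])) hu
  have hφ : ConvexOn ℝ (Set.Icc 0 1) fun u => ∑ k, fracEnergy γ (y k + u * (x k - y k)) := by
    refine convexOn_of_hasDerivWithinAt2_nonneg (convex_Icc 0 1)
      (f' := fun u => ∑ k, (x k - y k) * fracEnergyDeriv γ (y k + u * (x k - y k)))
      (f'' := fun u => ∑ k, (x k - y k) * ((x k - y k) *
        ((y k + u * (x k - y k))⁻¹ + γ * (1 - (y k + u * (x k - y k)))⁻¹)))
      (continuous_finsetSum _ fun k _ => (continuous_fracEnergy γ).comp
        (continuous_const.add (continuous_id.mul continuous_const))).continuousOn ?_ ?_ ?_ <;>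
      rw [interior_Icc] <;> intro u hu
    · refine (HasDerivAt.fun_sum fun k _ => hasDerivAt_comp_add_mul (f := fracEnergy γ)
        ((hinterior u hu k).imp_right (hasDerivAt_fracEnergy γ))).hasDerivWithinAt
    · refine (HasDerivAt.fun_sum fun k _ => (hasDerivAt_comp_add_mul (f := fracEnergyDeriv γ)
        (f' := fun z => z⁻¹ + γ * (1 - z)⁻¹) ((hinterior u hu k).imp_right
          (hasDerivAt_fracEnergyDeriv γ))).const_mul (x k - y k)).hasDerivWithinAt
    · have hz : (fun k => y k + u * (x k - y k)) ∈ stdSimplex ℝ ι := by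
        refine ⟨fun k => ?_, ?_⟩
        · nlinarith [hx.1 k, hy.1 k, hu.1, hu.2]
        · simp only [sum_add_distrib, ← mul_sum, sum_sub_distrib, hx.2, hy.2]; ring
      have hv : ∑ k, (x k - y k) = 0 := by rw [sum_sub_distrib, hx.2, hy.2, sub_self]
      simpa only [← mul_assoc, ← sq] using sum_sq_mul_inv_add_mul_inv_nonneg hγ hz hv
        fun k hk => (hinterior u hu k).resolve_right fun h => h.1.ne' hk
  have := hφ.2 (⟨zero_le_one, le_rfl⟩ : (1 : ℝ) ∈ Set.Icc 0 1)
    (⟨le_rfl, zero_le_one⟩ : (0 : ℝ) ∈ Set.Icc 0 1) ha hb hab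
  obtain rfl := eq_sub_of_add_eq' hab
  convert this using 3 <;> simp; ring

theorem InPolytope.row_mem_stdSimplex {n : ℕ} {p β : Matrix (Fin n) (Fin n) ℝ}
    (h : InPolytope p β) (i : Fin n) : β i ∈ stdSimplex ℝ (Fin n) :=
  ⟨h.1.1 i, h.1.2.1 i⟩

theorem convex_setOf_inPolytope {n : ℕ} (p : Matrix (Fin n) (Fin n) ℝ) :
    Convex ℝ {β | InPolytope p β} := by
  rintro β₁ ⟨⟨h₁0, h₁row, h₁col⟩, h₁p⟩ β₂ ⟨⟨h₂0, h₂row, h₂col⟩, h₂p⟩ a b ha hb hab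
  refine ⟨⟨fun i j => ?_, fun i => ?_, fun j => ?_⟩, fun i j hij => ?_⟩ <;>
    simp only [Matrix.add_apply, Matrix.smul_apply, smul_eq_mul, sum_add_distrib, ← mul_sum]
  · have := h₁0 i j; have := h₂0 i j; positivity
  · rw [h₁row, h₂row, mul_one, mul_one, hab]
  · rw [h₁col, h₂col, mul_one, mul_one, hab]
  · rw [h₁p i j hij, h₂p i j hij, mul_zero, mul_zero, add_zero]

theorem Ff_eq_sum_fracEnergy_sub {n : ℕ} (γ : ℝ) {p β : Matrix (Fin n) (Fin n) ℝ}
    (hp : ∀ i j, 0 ≤ p i j) (h : InPolytope p β) :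
    Ff γ p β = ∑ i, ∑ j, fracEnergy γ (β i j)
      - ∑ i, ∑ j, if 0 < p i j then β i j * log (p i j) else 0 := by
  simp only [Ff, ← sum_sub_distrib]
  refine sum_congr rfl fun i _ => sum_congr rfl fun j _ => ?_
  split_ifs with hpij
  · rcases (h.1.1 i j).eq_or_lt with hβ | hβ
    · simp [fracEnergy, ← hβ]
    · rw [fracEnergy, log_div hβ.ne' hpij.ne']; ring
  · simp [fracEnergy, h.2 i j (le_antisymm (not_lt.1 hpij) (hp i j))]

theorem convexOn_Ff {n : ℕ} {γ : ℝ} (hγ : -1 ≤ γ) {p : Matrix (Fin n) (Fin n) ℝ}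
    (hp : ∀ i j, 0 ≤ p i j) : ConvexOn ℝ {β | InPolytope p β} (Ff γ p) := by
  refine ⟨convex_setOf_inPolytope p, fun β₁ h₁ β₂ h₂ a b ha hb hab => ?_⟩
  have hrows : ∑ i, ∑ j, fracEnergy γ ((a • β₁ + b • β₂) i j)
      ≤ a * ∑ i, ∑ j, fracEnergy γ (β₁ i j) + b * ∑ i, ∑ j, fracEnergy γ (β₂ i j) := by
    rw [mul_sum, mul_sum, ← sum_add_distrib]
    exact sum_le_sum fun i _ => (convexOn_stdSimplex_sum_fracEnergy hγ).2
      (h₁.row_mem_stdSimplex i) (h₂.row_mem_stdSimplex i) ha hb hab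
  have hlinear : (∑ i, ∑ j, if 0 < p i j then (a • β₁ + b • β₂) i j * log (p i j) else 0)
      = a * (∑ i, ∑ j, if 0 < p i j then β₁ i j * log (p i j) else 0)
        + b * ∑ i, ∑ j, if 0 < p i j then β₂ i j * log (p i j) else 0 := by
    simp only [mul_sum, ← sum_add_distrib]
    refine sum_congr rfl fun i _ => sum_congr rfl fun j _ => ?_
    split_ifs
    · simp only [Matrix.add_apply, Matrix.smul_apply, smul_eq_mul]; ring
    · ring
  rw [smul_eq_mul, smul_eq_mul, Ff_eq_sum_fracEnergy_sub γ hp h₁, Ff_eq_sum_fracEnergy_sub γ hp h₂,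
    Ff_eq_sum_fracEnergy_sub γ hp (convex_setOf_inPolytope p h₁ h₂ ha hb hab), hlinear]
  linarith

theorem Ff_convexOn {n : ℕ} (γ : ℝ) (hγ : γ ∈ Set.Icc (-1 : ℝ) 1)
    (p : Matrix (Fin n) (Fin n) ℝ) (hp : ∀ i j, 0 ≤ p i j) :
    ∀ β₁ β₂ : Matrix (Fin n) (Fin n) ℝ, InPolytope p β₁ → InPolytope p β₂ →
      ∀ t : ℝ, 0 ≤ t → t ≤ 1 →
        Ff γ p (t • β₁ + (1 - t) • β₂) ≤ t * Ff γ p β₁ + (1 - t) * Ff γ p β₂ :=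
  fun _ _ h₁ h₂ _ ht₀ ht₁ =>
    (convexOn_Ff hγ.1 hp).2 h₁ h₂ ht₀ (sub_nonneg.2 ht₁) (add_sub_cancel _ _)
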